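/- arXiv:1408.4223 — 3 statements merged into one kernel-verified Lean document; each statement's English description precedes it below -/
import Mathlib

section
/- Let R be a Dedekind domain, π a finite group, and M an Rπ-lattice that is invertible (a direct summand of a permutation lattice). If 0 → M′ → N → M → 0 is an exact sequence of Rπ-lattices with M′ coflabby, then the sequence splits. -/
section Lattices

variable {R : Type*} [CommRing R] {π : Type*} [Group π]
  {M : Type*} [AddCommGroup M] [Module R M]
  {N : Type*} [AddCommGroup N] [Module R N]

/-- The direct sum (product) of two representations. -/
def Representation.prodRep (ρ : Representation R π M) (ρ' : Representation R π N) :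
    Representation R π (M × N) where
  toFun g := (ρ g).prodMap (ρ' g)
  map_one' := by ext x <;> simp
  map_mul' g h := by ext x <;> simp

/-- A permutation lattice: a free `R`-module with a basis permuted by `π`. -/
def Representation.IsPermutation (ρ : Representation R π M) : Prop :=
  ∃ (ι : Type) (_ : Fintype ι) (a : π →* Equiv.Perm ι) (e : M ≃ₗ[R] (ι → R)),
    ∀ (g : π) (m : M) (i : ι), e (ρ g m) i = e m ((a g)⁻¹ i)

/-- An invertible lattice: a direct summand of a permutation lattice. -/
def Representation.IsInvertible (ρ : Representation R π M) : Prop :=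
  ∃ (N' : Type) (_ : AddCommGroup N') (_ : Module R N') (ρ' : Representation R π N'),
    (ρ.prodRep ρ').IsPermutation

/-- The submodule of crossed homomorphisms (1-cocycles) `H → M`. -/
def oneCocyclesSub (ρ : Representation R π M) (H : Subgroup π) :
    Submodule R (H → M) where
  carrier := {f | ∀ g h : H, f (g * h) = ρ (g : π) (f h) + f g}
  add_mem' := by
    intro a b ha hb g h
    simp only [Pi.add_apply, map_add, ha g h, hb g h]
    abel
  zero_mem' := by intro g h; simp
  smul_mem' := by
    intro c a ha g h
    simp only [Pi.smul_apply, map_smul, ha g h, smul_add]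

/-- The coboundary map `M → (H → M)`, `v ↦ (g ↦ g·v - v)`. -/
def coboundaryMap (ρ : Representation R π M) (H : Subgroup π) : M →ₗ[R] (H → M) :=
  LinearMap.pi fun g : H => ρ (g : π) - LinearMap.id

/-- Group cohomology `H¹(H, M)`: crossed homomorphisms modulo principal ones. -/
noncomputable abbrev H1Sub (ρ : Representation R π M) (H : Subgroup π) :=
  oneCocyclesSub ρ H ⧸
    Submodule.comap (oneCocyclesSub ρ H).subtype (LinearMap.range (coboundaryMap ρ H))

/-- `M` is coflabby: `H¹(H, M) = 0` for all subgroups `H`. -/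
def IsCoflabby (ρ : Representation R π M) : Prop :=
  ∀ H : Subgroup π, Subsingleton (H1Sub ρ H)

end Lattices

/-!
Since `M` is projective, `g` has an `R`-linear section `s₀`. The defect `γ ↦ γ·s₀ - s₀` of its
equivariance is a 1-cocycle of `π` with values in `Hom_R(M, M′)` (acting by conjugation), and
subtracting `f ∘ φ` from `s₀` makes it equivariant as soon as the cocycle is the coboundary of `φ`.
So it suffices that `H¹(π, Hom_R(M, M′)) = 0`. This passes to direct summands of `M`; when `π`
permutes a basis `ι` of `M`, `Hom_R(M, M′) = M′^ι` is a product over the orbits of modules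
coinduced from the stabilizers `π_k`, so by Shapiro's lemma its `H¹` is `∏ H¹(π_k, M′) = 0`.
-/

section Splitting

variable {R : Type*} [CommRing R] {π : Type*} [Group π]
  {M : Type*} [AddCommGroup M] [Module R M]
  {M' : Type*} [AddCommGroup M'] [Module R M']
  {N : Type*} [AddCommGroup N] [Module R N]

def Representation.OneCocyclesAreCoboundaries (σ : Representation R π M) : Prop :=
  ∀ d : π → M, (∀ γ δ, d (γ * δ) = σ γ (d δ) + d γ) → ∃ a, ∀ γ, d γ = σ γ a - a

@[simp]
theorem Representation.prodRep_apply (ρ : Representation R π M) (ρ' : Representation R π N)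
    (γ : π) (x : M × N) : ρ.prodRep ρ' γ x = (ρ γ x.1, ρ' γ x.2) :=
  rfl

theorem MulAction.exists_orbit_section (π ι : Type*) [Group π] [MulAction π ι] :
    ∃ (r : ι → ι) (s : ι → π), (∀ (γ : π) i, r (γ • i) = r i) ∧ ∀ i, s i • r i = i := by
  have hs : ∀ i, ∃ γ : π, γ • (⟦i⟧ : Quotient (orbitRel π ι)).out = i := fun i =>
    mem_orbit_iff.mp <| mem_orbit_symm.mp <|
      orbitRel_apply.mp (Quotient.mk_out (s := orbitRel π ι) i)
  choose s hs using hs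
  exact ⟨fun i => (⟦i⟧ : Quotient (orbitRel π ι)).out, s,
    fun γ i => congrArg Quotient.out (Quotient.sound (orbitRel_apply.mpr (mem_orbit i γ))), hs⟩

theorem IsCoflabby.exists_eq_sub {ρ : Representation R π M} (hρ : IsCoflabby ρ)
    (H : Subgroup π) (c : H → M) (hc : c ∈ oneCocyclesSub ρ H) :
    ∃ v, ∀ h : H, c h = ρ h v - v := by
  have := hρ H
  have hzero : (Submodule.Quotient.mk ⟨c, hc⟩ : H1Sub ρ H) = 0 := Subsingleton.elim _ _
  obtain ⟨v, hv⟩ := (Submodule.Quotient.mk_eq_zero _).mp hzero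
  exact ⟨v, fun h => (congrFun hv h).symm⟩

theorem IsCoflabby.exists_coinduced_coboundary {ι : Type*} [MulAction π ι]
    {ρ : Representation R π M} (hρ : IsCoflabby ρ) (c : π → ι → M)
    (hc : ∀ γ δ i, c (γ * δ) i = ρ γ (c δ (γ⁻¹ • i)) + c γ i) :
    ∃ u : ι → M, ∀ γ i, c γ i = ρ γ (u (γ⁻¹ • i)) - u i := by
  obtain ⟨r, s, hr, hs⟩ := MulAction.exists_orbit_section π ι
  have hw : ∀ k, ∃ w, ∀ h : MulAction.stabilizer π k, c h k = ρ h w - w := fun k =>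
    hρ.exists_eq_sub _ (fun h => c h k) fun x y => by
      simp [hc, inv_smul_eq_iff.mpr (MulAction.mem_stabilizer_iff.mp x.2).symm]
  choose w hw using hw
  -- Shapiro's lemma made explicit: `i = s i • r i` with `r i` the representative of its orbit.
  refine ⟨fun i => ρ (s i) (w (r i)) - c (s i) i, fun γ i => ?_⟩
  set j := γ⁻¹ • i
  have hrj : r j = r i := hr _ _
  have hsi : (s i)⁻¹ • i = r i := inv_smul_eq_iff.mpr (hs i).symm
  have hh : (s i)⁻¹ * γ * s j ∈ MulAction.stabilizer π (r i) := by
    rw [MulAction.mem_stabilizer_iff, mul_smul, mul_smul, ← hrj, hs, smul_inv_smul, hsi, hrj]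
  have hsh : s i * ((s i)⁻¹ * γ * s j) = γ * s j := by group
  have key := hc (s i) ((s i)⁻¹ * γ * s j) i
  rw [hsh, hc, hsi, hw _ ⟨_, hh⟩, map_sub, ← Module.End.mul_apply, ← map_mul, hsh,
    map_mul, Module.End.mul_apply] at key
  simp only [hrj, map_sub]
  linear_combination (norm := abel) key

theorem Representation.IsPermutation.exists_basis {ρ : Representation R π M}
    (hρ : ρ.IsPermutation) :
    ∃ (ι : Type) (_ : MulAction π ι) (b : Module.Basis ι R M),
      ∀ (γ : π) i, ρ γ (b i) = b (γ • i) := by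
  classical
  obtain ⟨ι, _, a, e, he⟩ := hρ
  let _ := MulAction.compHom ι a
  refine ⟨ι, inferInstance, (Pi.basisFun R ι).map e.symm, fun γ i => e.injective ?_⟩
  ext j
  simp only [Module.Basis.map_apply, Pi.basisFun_apply, he, LinearEquiv.apply_symm_apply,
    Pi.single_apply, Equiv.Perm.inv_eq_iff_eq]
  rfl

theorem IsCoflabby.oneCocyclesAreCoboundaries_linHom_of_basis {ι : Type*} [MulAction π ι]
    {ρ : Representation R π M} {ρ' : Representation R π M'} (hρ' : IsCoflabby ρ')
    (b : Module.Basis ι R M) (hb : ∀ (γ : π) i, ρ γ (b i) = b (γ • i)) :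
    (ρ.linHom ρ').OneCocyclesAreCoboundaries := by
  intro d hd
  have hb_inv : ∀ (γ : π) i, ρ γ⁻¹ (b i) = b (γ⁻¹ • i) := fun γ i => hb γ⁻¹ i
  obtain ⟨u, hu⟩ := hρ'.exists_coinduced_coboundary (fun γ i => d γ (b i)) fun γ δ i => by
    simp [hd, hb_inv]
  refine ⟨b.constr R u, fun γ => b.ext fun i => ?_⟩
  simp [hu, hb_inv]

theorem Representation.IsInvertible.oneCocyclesAreCoboundaries_linHom
    {ρ : Representation R π M} (hρ : ρ.IsInvertible) {ρ' : Representation R π M'}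
    (hρ' : IsCoflabby ρ') : (ρ.linHom ρ').OneCocyclesAreCoboundaries := by
  obtain ⟨K, _, _, ρK, hP⟩ := hρ
  obtain ⟨ι, _, b, hb⟩ := Representation.IsPermutation.exists_basis hP
  intro d hd
  obtain ⟨φ, hφ⟩ := hρ'.oneCocyclesAreCoboundaries_linHom_of_basis b hb
    (fun γ => d γ ∘ₗ LinearMap.fst R M K) fun γ δ => by
      ext x <;> simp [hd]
  refine ⟨φ ∘ₗ LinearMap.inl R M K, fun γ => ?_⟩
  ext x
  simpa using LinearMap.congr_fun (hφ γ) (x, 0)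

theorem Representation.IsInvertible.projective {ρ : Representation R π M}
    (hρ : ρ.IsInvertible) : Module.Projective R M := by
  obtain ⟨K, _, _, ρK, hP⟩ := hρ
  obtain ⟨ι, _, b, -⟩ := Representation.IsPermutation.exists_basis hP
  have := Module.Projective.of_basis b
  exact .of_split (LinearMap.inl R M K) (LinearMap.fst R M K) (LinearMap.fst_comp_inl R M K)

theorem exists_equivariant_section_of_oneCocyclesAreCoboundaries [Module.Projective R M]
    {ρ' : Representation R π M'} {ρN : Representation R π N} {ρM : Representation R π M}
    (f : M' →ₗ[R] N) (g : N →ₗ[R] M)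
    (hf : ∀ γ x, f (ρ' γ x) = ρN γ (f x)) (hg : ∀ γ x, g (ρN γ x) = ρM γ (g x))
    (hinj : Function.Injective f) (hsurj : Function.Surjective g)
    (hex : LinearMap.range f = LinearMap.ker g)
    (hH1 : (ρM.linHom ρ').OneCocyclesAreCoboundaries) :
    ∃ s : M →ₗ[R] N, (∀ γ x, s (ρM γ x) = ρN γ (s x)) ∧ g ∘ₗ s = LinearMap.id := by
  obtain ⟨s₀, hs₀⟩ := g.exists_rightInverse_of_surjective (LinearMap.range_eq_top.mpr hsurj)
  have hs₀x : ∀ x, g (s₀ x) = x := LinearMap.congr_fun hs₀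
  have hD : ∀ γ x, ρM.linHom ρN γ s₀ x - s₀ x ∈ LinearMap.range f := fun γ x => by
    rw [hex, LinearMap.mem_ker]
    simp [hg, hs₀x]
  let d : π → M →ₗ[R] M' := fun γ => (LinearEquiv.ofInjective f hinj).symm ∘ₗ
    (ρM.linHom ρN γ s₀ - s₀).codRestrict (LinearMap.range f) (hD γ)
  have hfd : ∀ γ x, f (d γ x) = ρN γ (s₀ (ρM γ⁻¹ x)) - s₀ x := fun γ x => by simp [d]
  obtain ⟨φ, hφ⟩ := hH1 d fun γ δ => by
    ext x
    apply hinj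
    simp [hfd, hf, mul_inv_rev, map_mul]
  refine ⟨s₀ - f ∘ₗ φ, fun γ x => ?_, ?_⟩
  · have h := congr(f ($(hφ γ) (ρM γ x)))
    simp only [hfd, hf, LinearMap.sub_apply, LinearMap.comp_apply, Representation.linHom_apply,
      Representation.inv_self_apply, map_sub] at h
    simp only [LinearMap.sub_apply, LinearMap.comp_apply, map_sub]
    linear_combination (norm := abel) -h
  · ext x
    have hgf : ∀ y, g (f y) = 0 := fun y =>
      LinearMap.mem_ker.mp (hex ▸ LinearMap.mem_range_self f y)
    simp [hs₀x, hgf]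

end Splitting

theorem exact_seq_splits_of_invertible_of_coflabby_general
    (R : Type*) [CommRing R]
    (π : Type*) [Group π]
    (M' : Type*) [AddCommGroup M'] [Module R M']
    (N : Type*) [AddCommGroup N] [Module R N]
    (M : Type*) [AddCommGroup M] [Module R M]
    (ρ' : Representation R π M') (ρN : Representation R π N)
    (ρM : Representation R π M)
    (hM : ρM.IsInvertible) (hM' : IsCoflabby ρ')
    (f : M' →ₗ[R] N) (g : N →ₗ[R] M)
    (hf : ∀ (γ : π) (x : M'), f (ρ' γ x) = ρN γ (f x))
    (hg : ∀ (γ : π) (x : N), g (ρN γ x) = ρM γ (g x))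
    (hinj : Function.Injective f) (hsurj : Function.Surjective g)
    (hex : LinearMap.range f = LinearMap.ker g) :
    ∃ s : M →ₗ[R] N, (∀ (γ : π) (x : M), s (ρM γ x) = ρN γ (s x)) ∧
      g.comp s = LinearMap.id := by
  have := hM.projective
  exact exists_equivariant_section_of_oneCocyclesAreCoboundaries f g hf hg hinj hsurj hex
    (hM.oneCocyclesAreCoboundaries_linHom hM')

/-- If `0 → M′ → N → M → 0` is an exact sequence of `Rπ`-lattices over a Dedekind
domain `R`, with `M` invertible and `M′` coflabby, then the sequence splits. -/
theorem exact_seq_splits_of_invertible_of_coflabby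
    (R : Type*) [CommRing R] [IsDedekindDomain R]
    (π : Type*) [Group π] [Finite π]
    (M' : Type*) [AddCommGroup M'] [Module R M'] [Module.Finite R M']
    [NoZeroSMulDivisors R M']
    (N : Type*) [AddCommGroup N] [Module R N] [Module.Finite R N]
    [NoZeroSMulDivisors R N]
    (M : Type*) [AddCommGroup M] [Module R M] [Module.Finite R M]
    [NoZeroSMulDivisors R M]
    (ρ' : Representation R π M') (ρN : Representation R π N)
    (ρM : Representation R π M)
    (hM : ρM.IsInvertible) (hM' : IsCoflabby ρ')
    (f : M' →ₗ[R] N) (g : N →ₗ[R] M)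
    (hf : ∀ (γ : π) (x : M'), f (ρ' γ x) = ρN γ (f x))
    (hg : ∀ (γ : π) (x : N), g (ρN γ x) = ρM γ (g x))
    (hinj : Function.Injective f) (hsurj : Function.Surjective g)
    (hex : LinearMap.range f = LinearMap.ker g) :
    ∃ s : M →ₗ[R] N, (∀ (γ : π) (x : M), s (ρM γ x) = ρN γ (s x)) ∧
      g.comp s = LinearMap.id :=
  exact_seq_splits_of_invertible_of_coflabby_general R π M' N M ρ' ρN ρM hM hM' f g hf hg hinj hsurj
    hex
end

section
/- Let π be a finite group of order n and R a commutative ring. Let I_{Rπ} = Ker(ε: Rπ → R) be the augmentation ideal. Then H¹(π, I_{Rπ}) is isomorphic to R/nR as an R-module. -/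
section Augmentation

variable (R : Type) [CommRing R] (π : Type) [Group π]

/-- The augmentation map `ε : Rπ → R`, sending each group element to `1`. -/
noncomputable def augMap : MonoidAlgebra R π →ₐ[R] R :=
  MonoidAlgebra.lift R R π 1

/-- The augmentation ideal `I_{Rπ} = Ker ε`. -/
noncomputable def augIdeal : Ideal (MonoidAlgebra R π) :=
  RingHom.ker (augMap R π).toRingHom

/-- The representation of `π` on the augmentation ideal by left multiplication. -/
noncomputable def augRep : Representation R π (augIdeal R π) where
  toFun g :=
    { toFun := fun x => ⟨MonoidAlgebra.single g (1 : R) * (x : MonoidAlgebra R π),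
        Ideal.mul_mem_left _ _ x.2⟩
      map_add' := by intro x y; ext; simp [mul_add]
      map_smul' := by intro c x; ext; simp [Algebra.mul_smul_comm] }
  map_one' := by
    ext x
    simp [← MonoidAlgebra.one_def]
  map_mul' g h := by
    ext x
    simp [MonoidAlgebra.single_mul_single, mul_assoc]

end Augmentation

/-! A 1-cocycle `f : π → I_{Rπ}` is detected by `σ f = ∑ g, f(g)(1)`, the sum of the coefficients
at the identity of its values. For a coboundary `g ↦ g x - x` this is `ε x - n x(1) = -n x(1)`;
conversely, if `σ f = n r` then `y(k) = f(k⁻¹)(1) - r` lies in `I_{Rπ}` and the cocycle identity,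
read at the coefficient `1`, gives `g y - y = f g`. The cocycles `g ↦ (g - 1) r` have
`σ = r - n r`, so `σ` mod `n` induces `H¹(π, I_{Rπ}) ≅ R/nR`. -/

open MonoidAlgebra groupCohomology

section AugmentationIdeal

variable {R : Type} [CommRing R] {π : Type} [Group π]

lemma augMap_single (g : π) (r : R) : augMap R π (single g r) = r := by
  simp [augMap, lift_single]

lemma augMap_apply [Fintype π] (x : MonoidAlgebra R π) : augMap R π x = ∑ k, x.coeff k := by
  rw [augMap, lift_apply, Finsupp.sum_fintype] <;> simp

lemma mem_augIdeal_iff [Fintype π] (x : MonoidAlgebra R π) :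
    x ∈ augIdeal R π ↔ ∑ k, x.coeff k = 0 := by
  rw [← augMap_apply]
  rfl

lemma single_sub_single_one_mem_augIdeal (g : π) (r : R) :
    single g r - single 1 r ∈ augIdeal R π := by
  change augMap R π _ = 0
  rw [map_sub, augMap_single, augMap_single, sub_self]

lemma augRep_apply_coeff (g : π) (x : augIdeal R π) (k : π) :
    (augRep R π g x : MonoidAlgebra R π).coeff k = (x : MonoidAlgebra R π).coeff (g⁻¹ * k) := by
  change (single g (1 : R) * (x : MonoidAlgebra R π)).coeff k = _
  rw [coeff_single_mul_apply, one_mul]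

local notation "Iπ" => Rep.of (augRep R π)

lemma cocycles₁_apply_mul_coeff (f : cocycles₁ Iπ) (a b k : π) :
    (f (a * b) : MonoidAlgebra R π).coeff k =
      (f b : MonoidAlgebra R π).coeff (a⁻¹ * k) + (f a : MonoidAlgebra R π).coeff k := by
  rw [(mem_cocycles₁_iff (f : π → Iπ)).1 f.2 a b]
  exact congr($(augRep_apply_coeff a (f b) k) + (f a : MonoidAlgebra R π).coeff k)

variable [Fintype π]

noncomputable def cocycleCoeffSum : cocycles₁ Iπ →ₗ[R] R where
  toFun f := ∑ g, (f g : MonoidAlgebra R π).coeff 1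
  map_add' f f' := by simp only [← Finset.sum_add_distrib]; rfl
  map_smul' r f := by simp only [RingHom.id_apply, smul_eq_mul, Finset.mul_sum]; rfl

lemma cocycleCoeffSum_eq_of_d₀₁_eq {f : cocycles₁ Iπ} {x : augIdeal R π}
    (hf : (d₀₁ Iπ).hom x = f) :
    cocycleCoeffSum f = -(Fintype.card π * (x : MonoidAlgebra R π).coeff 1) := by
  have hfg (g : π) : (f g : MonoidAlgebra R π).coeff 1 =
      (x : MonoidAlgebra R π).coeff g⁻¹ - (x : MonoidAlgebra R π).coeff 1 := by
    rw [← hf]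
    change ((augRep R π g x : MonoidAlgebra R π) - x).coeff 1 = _
    rw [coeff_sub, Finsupp.sub_apply, augRep_apply_coeff, mul_one]
  have hsum : ∑ g : π, (x : MonoidAlgebra R π).coeff g⁻¹ = 0 := by
    rw [Fintype.sum_equiv (Equiv.inv π) (fun g => (x : MonoidAlgebra R π).coeff g⁻¹) _
      fun _ => rfl, ← mem_augIdeal_iff]
    exact x.2
  simp only [cocycleCoeffSum, LinearMap.coe_mk, AddHom.coe_mk, hfg, Finset.sum_sub_distrib, hsum,
    Finset.sum_const, Finset.card_univ, nsmul_eq_mul, zero_sub]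

lemma mem_coboundaries₁_of_cocycleCoeffSum_eq {f : cocycles₁ Iπ} {r : R}
    (hf : cocycleCoeffSum f = Fintype.card π * r) : ⇑f ∈ coboundaries₁ Iπ := by
  set y : MonoidAlgebra R π :=
    ofCoeff (Finsupp.equivFunOnFinite.symm fun k => (f k⁻¹ : MonoidAlgebra R π).coeff 1 - r)
  have hy (k : π) : y.coeff k = (f k⁻¹ : MonoidAlgebra R π).coeff 1 - r := rfl
  have hy_mem : y ∈ augIdeal R π := by
    rw [mem_augIdeal_iff]
    simp only [hy, Finset.sum_sub_distrib, Finset.sum_const, Finset.card_univ, nsmul_eq_mul]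
    rw [Fintype.sum_equiv (Equiv.inv π) (fun k => (f k⁻¹ : MonoidAlgebra R π).coeff 1)
      (fun k => (f k : MonoidAlgebra R π).coeff 1) fun _ => rfl]
    exact sub_eq_zero.2 hf
  refine ⟨⟨y, hy_mem⟩, funext fun g => Subtype.ext <| MonoidAlgebra.ext <| Finsupp.ext fun k => ?_⟩
  change (augRep R π g ⟨y, hy_mem⟩ : MonoidAlgebra R π).coeff k - y.coeff k = _
  have hcocycle := cocycles₁_apply_mul_coeff f k⁻¹ g 1
  rw [augRep_apply_coeff, hy, hy, mul_inv_rev, inv_inv, hcocycle, inv_inv, mul_one]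
  ring

lemma mem_coboundaries₁_iff_cocycleCoeffSum_mem (f : cocycles₁ Iπ) :
    ⇑f ∈ coboundaries₁ Iπ ↔ cocycleCoeffSum f ∈ Ideal.span {(Fintype.card π : R)} := by
  rw [Ideal.mem_span_singleton']
  constructor
  · rintro ⟨x, hx⟩
    exact ⟨-(x : MonoidAlgebra R π).coeff 1, by rw [cocycleCoeffSum_eq_of_d₀₁_eq hx]; ring⟩
  · rintro ⟨r, hr⟩
    exact mem_coboundaries₁_of_cocycleCoeffSum_eq (by rw [← hr, mul_comm])

omit [Fintype π] in
lemma single_sub_single_one_mem_cocycles₁ (r : R) :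
    (fun g => ⟨single g r - single 1 r, single_sub_single_one_mem_augIdeal g r⟩ : π → Iπ) ∈
      cocycles₁ Iπ := by
  refine (mem_cocycles₁_iff _).2 fun g h => Subtype.ext ?_
  change single (g * h) r - single 1 r =
    single g (1 : R) * (single h r - single 1 r) + (single g r - single 1 r)
  rw [mul_sub, single_mul_single, single_mul_single, one_mul, mul_one]
  abel

lemma surjective_mkQ_comp_cocycleCoeffSum :
    Function.Surjective ((Ideal.span {(Fintype.card π : R)}).mkQ ∘ₗ cocycleCoeffSum (π := π)) := by
  intro q
  obtain ⟨r, rfl⟩ := Submodule.mkQ_surjective _ q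
  refine ⟨⟨_, single_sub_single_one_mem_cocycles₁ (π := π) r⟩, (Submodule.Quotient.eq _).2 ?_⟩
  have hsum : cocycleCoeffSum ⟨_, single_sub_single_one_mem_cocycles₁ (π := π) r⟩ =
      r - Fintype.card π * r := by
    change ∑ g : π, (single g r - single 1 r : MonoidAlgebra R π).coeff 1 = _
    classical
    simp [coeff_sub, coeff_single, Finsupp.single_apply]
  rw [Ideal.mem_span_singleton', hsum]
  exact ⟨-r, by ring⟩

end AugmentationIdeal

/-- For a finite group `π` of order `n`, `H¹(π, I_{Rπ}) ≅ R/nR` as `R`-modules. -/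
theorem h1_augmentation_ideal_iso
    (R : Type) [CommRing R] (π : Type) [Group π] [Fintype π]
    (n : ℕ) (hn : Fintype.card π = n) :
    Nonempty (groupCohomology.H1 (Rep.of (augRep R π)) ≃ₗ[R]
      R ⧸ Ideal.span {(n : R)}) := by
  subst hn
  have hH1 : Function.Surjective (H1π (Rep.of (augRep R π))).hom :=
    (ModuleCat.epi_iff_surjective _).1 inferInstance
  have hker : LinearMap.ker (H1π (Rep.of (augRep R π))).hom =
      LinearMap.ker ((Ideal.span {(Fintype.card π : R)}).mkQ ∘ₗ cocycleCoeffSum) := by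
    ext f
    rw [LinearMap.mem_ker, LinearMap.mem_ker, LinearMap.comp_apply, Submodule.mkQ_apply,
      Submodule.Quotient.mk_eq_zero]
    exact (H1π_eq_zero_iff f).trans (mem_coboundaries₁_iff_cocycleCoeffSum_mem f)
  exact ⟨(LinearMap.quotKerEquivOfSurjective _ hH1).symm ≪≫ₗ Submodule.quotEquivOfEq _ _ hker ≪≫ₗ
    LinearMap.quotKerEquivOfSurjective _ surjective_mkQ_comp_cocycleCoeffSum⟩
end

section
/- Let π be a finite group of order n = pᵗ·n′ with p prime, t ≥ 1, and p ∤ n′. Let R be a discrete valuation ring of characteristic 0 whose maximal ideal is pR. If there is an injective R-module homomorphism R/pᵗR → H²(π, R) (trivial π-action on R), then π contains an element of order pᵗ; in particular the p-Sylow subgroup of π is cyclic of order pᵗ. -/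
/-!
Let `F` be a 2-cocycle of `π` with values in `R` (trivial action) and `S x = ∑ⱼ F (x, j)`.
Summing the cocycle identity over the last variable gives `|π| • F = δS`, and telescoping along
the powers of `x` gives `|π| ∣ orderOf x * S x`. If no element had order divisible by `pᵗ`, then,
since the prime-to-`p` part of `orderOf x` is a unit of `R`, `|π|` would divide `pᵗ⁻¹ * S x` for
every `x`; dividing by `|π|` exhibits `pᵗ⁻¹ • F` as a coboundary, contradicting the injectivity of
`R/pᵗR → H²(π, R)` on the class of `1`.
-/

universe u

open groupCohomology IsLocalRing

section LocalRing

variable {R : Type*} [CommRing R] [IsLocalRing R] {p : ℕ}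

theorem isUnit_natCast_of_coprime (hpR : (p : R) ∈ maximalIdeal R) {m : ℕ}
    (hpm : p.Coprime m) : IsUnit (m : R) := by
  obtain ⟨u, v, huv⟩ := hpm.cast (R := R)
  have hup : ¬IsUnit (u * p) := (mem_maximalIdeal _).1 (Ideal.mul_mem_left _ u hpR)
  exact isUnit_of_mul_isUnit_right ((isUnit_or_isUnit_of_add_one huv).resolve_left hup)

theorem dvd_ordProj_mul_of_dvd_natCast_mul (hp : p.Prime) (hpR : (p : R) ∈ maximalIdeal R)
    {m : ℕ} (hm : m ≠ 0) {d s : R} (h : d ∣ m * s) : d ∣ p ^ m.factorization p * s := by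
  have hunit : IsUnit ((m / p ^ m.factorization p : ℕ) : R) :=
    isUnit_natCast_of_coprime hpR (hp.coprime_iff_not_dvd.2 (Nat.not_dvd_ordCompl hp hm))
  rw [← Nat.ordProj_mul_ordCompl_eq_self m p, Nat.cast_mul, Nat.cast_pow, mul_comm (_ ^ _ : R),
    mul_assoc] at h
  exact hunit.dvd_mul_left.1 h

end LocalRing

section TrivialCocycle

variable {G A : Type*} [Group G] [Fintype G] [AddCommGroup A] {F : G × G → A}

theorem card_nsmul_eq_of_trivial_cocycle
    (hF : ∀ g h j : G, F (g * h, j) + F (g, h) = F (h, j) + F (g, h * j)) (g h : G) :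
    Fintype.card G • F (g, h) = ∑ j, F (g, j) + ∑ j, F (h, j) - ∑ j, F (g * h, j) := by
  have hsum := Finset.sum_congr rfl fun j (_ : j ∈ Finset.univ) => hF g h j
  have hshift : ∑ j, F (g, h * j) = ∑ j, F (g, j) :=
    Equiv.sum_comp (Equiv.mulLeft h) fun j => F (g, j)
  rw [Finset.sum_add_distrib, Finset.sum_add_distrib, Finset.sum_const, Finset.card_univ,
    hshift] at hsum
  rw [eq_sub_iff_add_eq, add_comm, hsum, add_comm]

theorem nsmul_sum_eq_sum_pow_add_card_nsmul
    (hF : ∀ g h j : G, F (g * h, j) + F (g, h) = F (h, j) + F (g, h * j)) (x : G) (k : ℕ) :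
    k • ∑ j, F (x, j) = ∑ j, F (x ^ k, j) +
      Fintype.card G • (∑ i ∈ Finset.range k, F (x ^ i, x) - F (1, 1)) := by
  induction k with
  | zero =>
    have h1 := card_nsmul_eq_of_trivial_cocycle hF 1 1
    rw [mul_one, add_sub_cancel_right] at h1
    simp [h1]
  | succ k ih =>
    simp only [succ_nsmul, ih, Finset.sum_range_succ, smul_sub, smul_add,
      card_nsmul_eq_of_trivial_cocycle hF, ← pow_succ]
    abel

theorem exists_orderOf_nsmul_eq_card_nsmul
    (hF : ∀ g h j : G, F (g * h, j) + F (g, h) = F (h, j) + F (g, h * j)) (x : G) :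
    ∃ a : A, orderOf x • ∑ j, F (x, j) = Fintype.card G • a := by
  refine ⟨∑ i ∈ Finset.range (orderOf x), F (x ^ i, x), ?_⟩
  rw [nsmul_sum_eq_sum_pow_add_card_nsmul hF, pow_orderOf_eq_one, smul_sub,
    card_nsmul_eq_of_trivial_cocycle hF 1 1, mul_one]
  abel

theorem exists_coboundary_eq_mul_of_card_dvd {R : Type*} [CommRing R] [IsDomain R]
    {F : G × G → R} (hF : ∀ g h j : G, F (g * h, j) + F (g, h) = F (h, j) + F (g, h * j))
    (hG : (Fintype.card G : R) ≠ 0) {y : R} (hy : ∀ x, (Fintype.card G : R) ∣ y * ∑ j, F (x, j)) :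
    ∃ b : G → R, ∀ g h, b h - b (g * h) + b g = y * F (g, h) := by
  choose b hb using hy
  refine ⟨b, fun g h => mul_left_cancel₀ hG ?_⟩
  have hcard := card_nsmul_eq_of_trivial_cocycle hF g h
  rw [nsmul_eq_mul] at hcard
  linear_combination -(hb h) + hb (g * h) - hb g - y * hcard

end TrivialCocycle

section H2Trivial

variable {R G : Type u} [CommRing R] [Group G]

theorem cocycles₂_trivial_add_eq (F : cocycles₂ (Rep.trivial R G R)) (g h j : G) :
    F (g * h, j) + F (g, h) = F (h, j) + F (g, h * j) := by
  simpa using (mem_cocycles₂_iff F).1 F.2 g h j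

variable [IsDomain R] [Fintype G]

theorem smul_H2π_eq_zero_of_card_dvd (hG : (Fintype.card G : R) ≠ 0)
    (F : cocycles₂ (Rep.trivial R G R)) {y : R}
    (hy : ∀ x, (Fintype.card G : R) ∣ y * ∑ j, F (x, j)) :
    y • H2π (Rep.trivial R G R) F = 0 := by
  obtain ⟨b, hb⟩ := exists_coboundary_eq_mul_of_card_dvd (cocycles₂_trivial_add_eq F) hG hy
  rw [← map_smul, H2π_eq_zero_iff]
  exact ⟨b, funext fun ⟨g, h⟩ => (by simpa using hb g h : _ = y * F (g, h))⟩

theorem exists_pow_succ_dvd_orderOf [IsLocalRing R] {p : ℕ} (hp : p.Prime)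
    (hpR : (p : R) ∈ maximalIdeal R) (hG : (Fintype.card G : R) ≠ 0)
    {c : H2 (Rep.trivial R G R)} {k : ℕ} (hc : (p : R) ^ k • c ≠ 0) :
    ∃ x : G, p ^ (k + 1) ∣ orderOf x := by
  obtain ⟨F, rfl⟩ := (ModuleCat.epi_iff_surjective (H2π _)).1 inferInstance c
  by_contra! hx
  refine hc (smul_H2π_eq_zero_of_card_dvd hG F fun x => ?_)
  obtain ⟨a, ha⟩ := exists_orderOf_nsmul_eq_card_nsmul (cocycles₂_trivial_add_eq F) x
  have hord : (Fintype.card G : R) ∣ orderOf x * ∑ j, F (x, j) :=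
    ⟨a, by simpa only [nsmul_eq_mul] using ha⟩
  have hle : (orderOf x).factorization p ≤ k := by
    by_contra! hlt
    exact hx x ((pow_dvd_pow p hlt).trans (Nat.ordProj_dvd _ _))
  exact (dvd_ordProj_mul_of_dvd_natCast_mul hp hpR (orderOf_pos x).ne' hord).trans
    (mul_dvd_mul_right (pow_dvd_pow _ hle) _)

end H2Trivial

theorem pow_smul_ne_zero_of_injective {R M : Type*} [CommRing R] [IsDomain R] [AddCommGroup M]
    [Module R M] {q : R} (hq0 : q ≠ 0) (hq : ¬IsUnit q) {k : ℕ}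
    {f : (R ⧸ Ideal.span {q ^ (k + 1)}) →ₗ[R] M} (hf : Function.Injective f) :
    q ^ k • f 1 ≠ 0 := by
  rw [← map_smul, Ne, map_eq_zero_iff f hf, Algebra.smul_def, mul_one,
    Ideal.Quotient.algebraMap_eq, Ideal.Quotient.eq_zero_iff_mem, Ideal.mem_span_singleton,
    pow_dvd_pow_iff hq0 hq]
  omega

theorem Nat.factorization_pow_mul_of_not_dvd {p n : ℕ} (hp : p.Prime) (hn : ¬p ∣ n) (t : ℕ) :
    (p ^ t * n).factorization p = t := by
  have hn0 : n ≠ 0 := fun h => hn (h ▸ dvd_zero p)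
  rw [Nat.factorization_mul (pow_ne_zero _ hp.ne_zero) hn0, Finsupp.add_apply,
    hp.factorization_pow, Finsupp.single_eq_same, Nat.factorization_eq_zero_of_not_dvd hn,
    add_zero]

theorem Sylow.isCyclic_of_orderOf_eq {G : Type*} [Group G] [Finite G] {p : ℕ} [Fact p.Prime]
    {g : G} (hg : orderOf g = p ^ (Nat.card G).factorization p) (P : Sylow p G) :
    IsCyclic P := by
  let Q : Sylow p G := .ofCard (Subgroup.zpowers g) (by rw [Nat.card_zpowers, hg])
  have : IsCyclic Q := Subgroup.isCyclic_zpowers g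
  exact isCyclic_of_surjective (Q.equiv P) (MulEquiv.surjective _)

/-- Let `R` be a DVR of characteristic `0` with maximal ideal `pR`, and `π` a finite
group of order `n = pᵗ·n′` with `t ≥ 1` and `p ∤ n′`. If there is an injective
`R`-module map `R/pᵗR → H²(π, R)` (trivial action), then `π` has an element of order
`pᵗ`; in particular every `p`-Sylow subgroup of `π` is cyclic of order `pᵗ`. -/
theorem sylow_cyclic_of_embedding_h2
    (p t n' : ℕ) (hp : p.Prime) (ht : 1 ≤ t) (hn' : ¬ p ∣ n')
    (R : Type) [CommRing R] [IsDomain R] [IsDiscreteValuationRing R] [CharZero R]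
    (hmax : IsLocalRing.maximalIdeal R = Ideal.span {(p : R)})
    (π : Type) [Group π] [Fintype π] (hcard : Fintype.card π = p ^ t * n')
    (f : (R ⧸ Ideal.span {(p : R) ^ t}) →ₗ[R]
      groupCohomology.H2 (Rep.trivial R π R))
    (hf : Function.Injective f) :
    (∃ g : π, orderOf g = p ^ t) ∧
      ∀ P : Sylow p π, IsCyclic P ∧ Nat.card P = p ^ t := by
  have := Fact.mk hp
  have hpR : (p : R) ∈ maximalIdeal R := hmax ▸ Ideal.mem_span_singleton_self _
  obtain ⟨k, rfl⟩ := Nat.exists_eq_add_of_le' ht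
  have hc := pow_smul_ne_zero_of_injective (Nat.cast_ne_zero.2 hp.ne_zero)
    ((mem_maximalIdeal _).1 hpR) hf
  obtain ⟨x, hx⟩ := exists_pow_succ_dvd_orderOf hp hpR (Nat.cast_ne_zero.2 Fintype.card_ne_zero) hc
  have hg := orderOf_pow_orderOf_div (orderOf_pos x).ne' hx
  have hmult : (Nat.card π).factorization p = k + 1 := by
    rw [Nat.card_eq_fintype_card, hcard, Nat.factorization_pow_mul_of_not_dvd hp hn']
  refine ⟨⟨_, hg⟩, fun P => ⟨P.isCyclic_of_orderOf_eq (by rwa [hmult]), ?_⟩⟩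
  rw [P.card_eq_multiplicity, hmult]
end
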